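/- arXiv:math/0511458 — 3 statements merged into one kernel-verified Lean document; each statement's English description precedes it below -/
import Mathlib

section
/- A skew-symmetric real 7×7 matrix X = (X_{ij}) (acting on ℝ⁷ in the standard basis) satisfies φ(X u, v, w) + φ(u, X v, w) + φ(u, v, X w) = 0 for all u, v, w ∈ ℝ⁷ if and only if its entries satisfy the seven linear relations X_{67} = X_{12} + X_{34}, X_{75} = X_{13} + X_{42}, X_{56} = X_{14} + X_{23}, X_{51} = −X_{64} + X_{73}, X_{52} = −X_{63} − X_{74}, X_{53} = X_{62} − X_{71}, X_{54} = X_{61} + X_{72}. (Explicit description of 𝔤₂ inside 𝔰𝔬(7).) -/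
noncomputable section

open Matrix

/-- `3 × 3` determinant of coordinates `a, b, c` of `(x, y, z)`. -/
def det3 (a b c : Fin 7) (x y z : Fin 7 → ℝ) : ℝ :=
  x a * (y b * z c - y c * z b) - x b * (y a * z c - y c * z a) +
    x c * (y a * z b - y b * z a)

/-- The associative calibration `φ` of Harvey–Lawson on `ℝ⁷`. -/
def phi (x y z : Fin 7 → ℝ) : ℝ :=
  det3 4 5 6 x y z - det3 4 0 1 x y z - det3 4 2 3 x y z -
    det3 5 0 2 x y z - det3 5 3 1 x y z - det3 6 0 3 x y z - det3 6 1 2 x y z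

set_option maxHeartbeats 2000000 in
/-- Explicit description of `𝔤₂ ⊂ 𝔰𝔬(7)`: a skew-symmetric `7 × 7` matrix `X`
infinitesimally stabilizes `φ` iff its entries satisfy the seven linear
relations below.  (Indices are `0`-based: `X i j` here is `X_{(i+1)(j+1)}` in
the `1`-based notation of the paper.) -/
theorem mem_g2_iff_relations (X : Matrix (Fin 7) (Fin 7) ℝ) (hX : Xᵀ = -X) :
    (∀ u v w : Fin 7 → ℝ,
        phi (X *ᵥ u) v w + phi u (X *ᵥ v) w + phi u v (X *ᵥ w) = 0) ↔
      (X 5 6 = X 0 1 + X 2 3 ∧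
       X 6 4 = X 0 2 + X 3 1 ∧
       X 4 5 = X 0 3 + X 1 2 ∧
       X 4 0 = -X 5 3 + X 6 2 ∧
       X 4 1 = -X 5 2 - X 6 3 ∧
       X 4 2 = X 5 1 - X 6 0 ∧
       X 4 3 = X 5 0 + X 6 1) := by
  have hs : ∀ i j : Fin 7, X j i = -X i j := by
    intro i j
    have := congrFun (congrFun hX i) j
    simpa [Matrix.transpose_apply, Matrix.neg_apply] using this
  constructor
  · intro h
    have k1 := h (Pi.single 0 1) (Pi.single 2 1) (Pi.single 6 1)
    have k2 := h (Pi.single 0 1) (Pi.single 1 1) (Pi.single 6 1)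
    have k3 := h (Pi.single 0 1) (Pi.single 1 1) (Pi.single 5 1)
    have k4 := h (Pi.single 0 1) (Pi.single 2 1) (Pi.single 3 1)
    have k5 := h (Pi.single 1 1) (Pi.single 2 1) (Pi.single 3 1)
    have k6 := h (Pi.single 0 1) (Pi.single 1 1) (Pi.single 2 1)
    have k7 := h (Pi.single 0 1) (Pi.single 1 1) (Pi.single 3 1)
    simp [phi, det3, mulVec, dotProduct, Fin.sum_univ_seven, Pi.single_apply] at k1 k2 k3 k4 k5 k6 k7
    refine ⟨?_, ?_, ?_, ?_, ?_, ?_, ?_⟩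
    · linarith [hs 0 1, hs 2 3, hs 5 6, k1]
    · linarith [hs 0 2, hs 1 3, hs 4 6, k2]
    · linarith [hs 0 3, hs 1 2, hs 4 5, k3]
    · linarith [hs 0 4, hs 3 5, hs 2 6, k4]
    · linarith [hs 1 4, hs 2 5, hs 3 6, k5]
    · linarith [hs 2 4, hs 1 5, hs 0 6, k6]
    · linarith [hs 3 4, hs 0 5, hs 1 6, k7]
  · rintro ⟨h1, h2, h3, h4, h5, h6, h7⟩ u v w
    have d0 : X 0 0 = 0 := by have := hs 0 0; linarith
    have d1 : X 1 1 = 0 := by have := hs 1 1; linarith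
    have d2 : X 2 2 = 0 := by have := hs 2 2; linarith
    have d3 : X 3 3 = 0 := by have := hs 3 3; linarith
    have d4 : X 4 4 = 0 := by have := hs 4 4; linarith
    have d5 : X 5 5 = 0 := by have := hs 5 5; linarith
    have d6 : X 6 6 = 0 := by have := hs 6 6; linarith
    have e56 : X 5 6 = X 0 1 + X 2 3 := h1
    have e46 : X 4 6 = -X 0 2 + X 1 3 := by linarith [h2, hs 4 6, hs 1 3]
    have e45 : X 4 5 = X 0 3 + X 1 2 := h3
    have e04 : X 0 4 = -X 3 5 + X 2 6 := by linarith [h4, hs 0 4, hs 3 5, hs 2 6]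
    have e14 : X 1 4 = -X 2 5 - X 3 6 := by linarith [h5, hs 1 4, hs 2 5, hs 3 6]
    have e24 : X 2 4 = X 1 5 - X 0 6 := by linarith [h6, hs 2 4, hs 1 5, hs 0 6]
    have e34 : X 3 4 = X 0 5 + X 1 6 := by linarith [h7, hs 3 4, hs 0 5, hs 1 6]
    have e10 : X 1 0 = -X 0 1 := hs 0 1
    have e20 : X 2 0 = -X 0 2 := hs 0 2
    have e21 : X 2 1 = -X 1 2 := hs 1 2
    have e30 : X 3 0 = -X 0 3 := hs 0 3
    have e31 : X 3 1 = -X 1 3 := hs 1 3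
    have e32 : X 3 2 = -X 2 3 := hs 2 3
    have e40 : X 4 0 = -(-X 3 5 + X 2 6) := by rw [hs 0 4, e04]
    have e41 : X 4 1 = -(-X 2 5 - X 3 6) := by rw [hs 1 4, e14]
    have e42 : X 4 2 = -(X 1 5 - X 0 6) := by rw [hs 2 4, e24]
    have e43 : X 4 3 = -(X 0 5 + X 1 6) := by rw [hs 3 4, e34]
    have e50 : X 5 0 = -X 0 5 := hs 0 5
    have e51 : X 5 1 = -X 1 5 := hs 1 5
    have e52 : X 5 2 = -X 2 5 := hs 2 5
    have e53 : X 5 3 = -X 3 5 := hs 3 5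
    have e54 : X 5 4 = -(X 0 3 + X 1 2) := by rw [hs 4 5, e45]
    have e60 : X 6 0 = -X 0 6 := hs 0 6
    have e61 : X 6 1 = -X 1 6 := hs 1 6
    have e62 : X 6 2 = -X 2 6 := hs 2 6
    have e63 : X 6 3 = -X 3 6 := hs 3 6
    have e64 : X 6 4 = -(-X 0 2 + X 1 3) := by rw [hs 4 6, e46]
    have e65 : X 6 5 = -(X 0 1 + X 2 3) := by rw [hs 5 6, e56]
    simp only [phi, det3, mulVec, dotProduct, Fin.sum_univ_seven]
    simp only [d0, d1, d2, d3, d4, d5, d6, e56, e46, e45, e04, e14, e24, e34, e10, e20, e21, e30, e31, e32, e40, e41, e42, e43, e50, e51, e52, e53, e54, e60, e61, e62, e63, e64, e65]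
    ring
end
end

section
/- The set 𝔤₂ is a Lie subalgebra of gl(7, ℝ) (it is closed under the matrix commutator, in addition to being a linear subspace), and its dimension as a real vector space is 14. -/
set_option maxHeartbeats 1000000

noncomputable section

open Matrix

/-- `𝔤₂`: the skew-symmetric `7 × 7` real matrices infinitesimally
stabilizing `φ`. -/
def g2 : Set (Matrix (Fin 7) (Fin 7) ℝ) :=
  {X | Xᵀ = -X ∧ ∀ u v w : Fin 7 → ℝ,
    phi (X *ᵥ u) v w + phi u (X *ᵥ v) w + phi u v (X *ᵥ w) = 0}

/-! Auxiliary material. -/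

lemma cv7_5 {α : Type*} (a0 a1 a2 a3 a4 a5 a6 : α) : ![a0,a1,a2,a3,a4,a5,a6] 5 = a5 := rfl
lemma cv7_6 {α : Type*} (a0 a1 a2 a3 a4 a5 a6 : α) : ![a0,a1,a2,a3,a4,a5,a6] 6 = a6 := rfl

lemma phi_add₁ (x x' y z : Fin 7 → ℝ) : phi (x + x') y z = phi x y z + phi x' y z := by
  simp only [phi, det3, Pi.add_apply]; ring
lemma phi_add₂ (x y y' z : Fin 7 → ℝ) : phi x (y + y') z = phi x y z + phi x y' z := by
  simp only [phi, det3, Pi.add_apply]; ring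
lemma phi_add₃ (x y z z' : Fin 7 → ℝ) : phi x y (z + z') = phi x y z + phi x y z' := by
  simp only [phi, det3, Pi.add_apply]; ring
lemma phi_sub₁ (x x' y z : Fin 7 → ℝ) : phi (x - x') y z = phi x y z - phi x' y z := by
  simp only [phi, det3, Pi.sub_apply]; ring
lemma phi_sub₂ (x y y' z : Fin 7 → ℝ) : phi x (y - y') z = phi x y z - phi x y' z := by
  simp only [phi, det3, Pi.sub_apply]; ring
lemma phi_sub₃ (x y z z' : Fin 7 → ℝ) : phi x y (z - z') = phi x y z - phi x y z' := by
  simp only [phi, det3, Pi.sub_apply]; ring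
lemma phi_smul₁ (r : ℝ) (x y z : Fin 7 → ℝ) : phi (r • x) y z = r * phi x y z := by
  simp only [phi, det3, Pi.smul_apply, smul_eq_mul]; ring
lemma phi_smul₂ (r : ℝ) (x y z : Fin 7 → ℝ) : phi x (r • y) z = r * phi x y z := by
  simp only [phi, det3, Pi.smul_apply, smul_eq_mul]; ring
lemma phi_smul₃ (r : ℝ) (x y z : Fin 7 → ℝ) : phi x y (r • z) = r * phi x y z := by
  simp only [phi, det3, Pi.smul_apply, smul_eq_mul]; ring

/-- The general element of `𝔤₂`, with 14 parameters. -/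
def gmat (c : Fin 14 → ℝ) : Matrix (Fin 7) (Fin 7) ℝ :=
  Matrix.of
    ![![0, -c 4 + c 13, c 1 - c 12, -c 0 + c 11, c 7 - c 9, -c 3 + c 8, c 2 - c 5],
      ![c 4 - c 13, 0, c 0, c 1, -c 6 - c 10, c 2, c 3],
      ![-c 1 + c 12, -c 0, 0, c 4, c 5, c 6, c 7],
      ![c 0 - c 11, -c 1, -c 4, 0, c 8, c 9, c 10],
      ![-c 7 + c 9, c 6 + c 10, -c 5, -c 8, 0, c 11, c 12],
      ![c 3 - c 8, -c 2, -c 6, -c 9, -c 11, 0, c 13],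
      ![-c 2 + c 5, -c 3, -c 7, -c 10, -c 12, -c 13, 0]]

/-- Reading off the 14 free coordinates. -/
def pmap (X : Matrix (Fin 7) (Fin 7) ℝ) : Fin 14 → ℝ :=
  ![X 1 2, X 1 3, X 1 5, X 1 6, X 2 3, X 2 4, X 2 5, X 2 6, X 3 4, X 3 5,
    X 3 6, X 4 5, X 4 6, X 5 6]

lemma gmat_mv_0 (c : Fin 14 → ℝ) (u : Fin 7 → ℝ) :
    (gmat c *ᵥ u) 0 = (-c 4 + c 13) * u 1 + (c 1 - c 12) * u 2 + (-c 0 + c 11) * u 3 + (c 7 - c 9) * u 4 + (-c 3 + c 8) * u 5 + (c 2 - c 5) * u 6 := by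
  simp only [Matrix.mulVec, dotProduct, Fin.sum_univ_seven, gmat,
    Matrix.of_apply, Matrix.cons_val_zero, Matrix.cons_val_one,
    Matrix.head_cons, Matrix.cons_val_two, Matrix.tail_cons,
    Matrix.cons_val_three, Matrix.cons_val_four, cv7_5, cv7_6]
  ring

lemma gmat_mv_1 (c : Fin 14 → ℝ) (u : Fin 7 → ℝ) :
    (gmat c *ᵥ u) 1 = (c 4 - c 13) * u 0 + (c 0) * u 2 + (c 1) * u 3 + (-c 6 - c 10) * u 4 + (c 2) * u 5 + (c 3) * u 6 := by
  simp only [Matrix.mulVec, dotProduct, Fin.sum_univ_seven, gmat,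
    Matrix.of_apply, Matrix.cons_val_zero, Matrix.cons_val_one,
    Matrix.head_cons, Matrix.cons_val_two, Matrix.tail_cons,
    Matrix.cons_val_three, Matrix.cons_val_four, cv7_5, cv7_6]
  ring

lemma gmat_mv_2 (c : Fin 14 → ℝ) (u : Fin 7 → ℝ) :
    (gmat c *ᵥ u) 2 = (-c 1 + c 12) * u 0 + (-c 0) * u 1 + (c 4) * u 3 + (c 5) * u 4 + (c 6) * u 5 + (c 7) * u 6 := by
  simp only [Matrix.mulVec, dotProduct, Fin.sum_univ_seven, gmat,
    Matrix.of_apply, Matrix.cons_val_zero, Matrix.cons_val_one,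
    Matrix.head_cons, Matrix.cons_val_two, Matrix.tail_cons,
    Matrix.cons_val_three, Matrix.cons_val_four, cv7_5, cv7_6]
  ring

lemma gmat_mv_3 (c : Fin 14 → ℝ) (u : Fin 7 → ℝ) :
    (gmat c *ᵥ u) 3 = (c 0 - c 11) * u 0 + (-c 1) * u 1 + (-c 4) * u 2 + (c 8) * u 4 + (c 9) * u 5 + (c 10) * u 6 := by
  simp only [Matrix.mulVec, dotProduct, Fin.sum_univ_seven, gmat,
    Matrix.of_apply, Matrix.cons_val_zero, Matrix.cons_val_one,
    Matrix.head_cons, Matrix.cons_val_two, Matrix.tail_cons,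
    Matrix.cons_val_three, Matrix.cons_val_four, cv7_5, cv7_6]
  ring

lemma gmat_mv_4 (c : Fin 14 → ℝ) (u : Fin 7 → ℝ) :
    (gmat c *ᵥ u) 4 = (-c 7 + c 9) * u 0 + (c 6 + c 10) * u 1 + (-c 5) * u 2 + (-c 8) * u 3 + (c 11) * u 5 + (c 12) * u 6 := by
  simp only [Matrix.mulVec, dotProduct, Fin.sum_univ_seven, gmat,
    Matrix.of_apply, Matrix.cons_val_zero, Matrix.cons_val_one,
    Matrix.head_cons, Matrix.cons_val_two, Matrix.tail_cons,
    Matrix.cons_val_three, Matrix.cons_val_four, cv7_5, cv7_6]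
  ring

lemma gmat_mv_5 (c : Fin 14 → ℝ) (u : Fin 7 → ℝ) :
    (gmat c *ᵥ u) 5 = (c 3 - c 8) * u 0 + (-c 2) * u 1 + (-c 6) * u 2 + (-c 9) * u 3 + (-c 11) * u 4 + (c 13) * u 6 := by
  simp only [Matrix.mulVec, dotProduct, Fin.sum_univ_seven, gmat,
    Matrix.of_apply, Matrix.cons_val_zero, Matrix.cons_val_one,
    Matrix.head_cons, Matrix.cons_val_two, Matrix.tail_cons,
    Matrix.cons_val_three, Matrix.cons_val_four, cv7_5, cv7_6]
  ring

lemma gmat_mv_6 (c : Fin 14 → ℝ) (u : Fin 7 → ℝ) :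
    (gmat c *ᵥ u) 6 = (-c 2 + c 5) * u 0 + (-c 3) * u 1 + (-c 7) * u 2 + (-c 10) * u 3 + (-c 12) * u 4 + (-c 13) * u 5 := by
  simp only [Matrix.mulVec, dotProduct, Fin.sum_univ_seven, gmat,
    Matrix.of_apply, Matrix.cons_val_zero, Matrix.cons_val_one,
    Matrix.head_cons, Matrix.cons_val_two, Matrix.tail_cons,
    Matrix.cons_val_three, Matrix.cons_val_four, cv7_5, cv7_6]
  ring

lemma gmat_mem (c : Fin 14 → ℝ) : gmat c ∈ g2 := by
  constructor
  · ext i j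
    rw [Matrix.transpose_apply, Matrix.neg_apply]
    fin_cases i <;> fin_cases j <;>
      simp only [gmat, Matrix.of_apply, Matrix.cons_val_zero, Matrix.cons_val_one,
        Matrix.head_cons, Matrix.cons_val_two, Matrix.tail_cons,
        Matrix.cons_val_three, Matrix.cons_val_four, cv7_5, cv7_6,
        Fin.reduceFinMk] <;> ring
  · intro u v w
    simp only [phi, det3, gmat_mv_0, gmat_mv_1, gmat_mv_2, gmat_mv_3,
      gmat_mv_4, gmat_mv_5, gmat_mv_6]
    ring

lemma pmap_gmat (c : Fin 14 → ℝ) : pmap (gmat c) = c := by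
  funext t
  fin_cases t <;> rfl

lemma gmat_pmap {X : Matrix (Fin 7) (Fin 7) ℝ} (hX : X ∈ g2) : gmat (pmap X) = X := by
  obtain ⟨hskew, h⟩ := hX
  have hs : ∀ i j, X j i = -X i j := by
    intro i j
    have := congrFun (congrFun hskew i) j
    simpa [Matrix.transpose_apply, Matrix.neg_apply] using this
  have h1 := h (Pi.single 0 1) (Pi.single 1 1) (Pi.single 2 1)
  have h2 := h (Pi.single 0 1) (Pi.single 1 1) (Pi.single 3 1)
  have h3 := h (Pi.single 0 1) (Pi.single 1 1) (Pi.single 5 1)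
  have h4 := h (Pi.single 0 1) (Pi.single 1 1) (Pi.single 6 1)
  have h5 := h (Pi.single 0 1) (Pi.single 2 1) (Pi.single 3 1)
  have h6 := h (Pi.single 0 1) (Pi.single 2 1) (Pi.single 6 1)
  have h7 := h (Pi.single 1 1) (Pi.single 2 1) (Pi.single 3 1)
  simp [phi, det3, Matrix.mulVec_single, Pi.single_apply] at h1 h2 h3 h4 h5 h6 h7
  have key : gmat (pmap X) = Matrix.of
      ![![0, -X 2 3 + X 5 6, X 1 3 - X 4 6, -X 1 2 + X 4 5, X 2 6 - X 3 5, -X 1 6 + X 3 4, X 1 5 - X 2 4],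
        ![X 2 3 - X 5 6, 0, X 1 2, X 1 3, -X 2 5 - X 3 6, X 1 5, X 1 6],
        ![-X 1 3 + X 4 6, -X 1 2, 0, X 2 3, X 2 4, X 2 5, X 2 6],
        ![X 1 2 - X 4 5, -X 1 3, -X 2 3, 0, X 3 4, X 3 5, X 3 6],
        ![-X 2 6 + X 3 5, X 2 5 + X 3 6, -X 2 4, -X 3 4, 0, X 4 5, X 4 6],
        ![X 1 6 - X 3 4, -X 1 5, -X 2 5, -X 3 5, -X 4 5, 0, X 5 6],
        ![-X 1 5 + X 2 4, -X 1 6, -X 2 6, -X 3 6, -X 4 6, -X 5 6, 0]] := rfl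
  rw [key]
  ext i j
  fin_cases i <;> fin_cases j
  · simp only [Matrix.of_apply, Matrix.cons_val_zero, Matrix.cons_val_one,
        Matrix.head_cons, Matrix.cons_val_two, Matrix.tail_cons,
        Matrix.cons_val_three, Matrix.cons_val_four, cv7_5, cv7_6,
        Fin.reduceFinMk]
    linarith [hs 0 0]
  · simp only [Matrix.of_apply, Matrix.cons_val_zero, Matrix.cons_val_one,
        Matrix.head_cons, Matrix.cons_val_two, Matrix.tail_cons,
        Matrix.cons_val_three, Matrix.cons_val_four, cv7_5, cv7_6,
        Fin.reduceFinMk]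
    linarith [h6, hs 0 1, hs 2 3, hs 5 6]
  · simp only [Matrix.of_apply, Matrix.cons_val_zero, Matrix.cons_val_one,
        Matrix.head_cons, Matrix.cons_val_two, Matrix.tail_cons,
        Matrix.cons_val_three, Matrix.cons_val_four, cv7_5, cv7_6,
        Fin.reduceFinMk]
    linarith [h4, hs 0 2, hs 1 3, hs 4 6]
  · simp only [Matrix.of_apply, Matrix.cons_val_zero, Matrix.cons_val_one,
        Matrix.head_cons, Matrix.cons_val_two, Matrix.tail_cons,
        Matrix.cons_val_three, Matrix.cons_val_four, cv7_5, cv7_6,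
        Fin.reduceFinMk]
    linarith [h3, hs 0 3, hs 1 2, hs 4 5]
  · simp only [Matrix.of_apply, Matrix.cons_val_zero, Matrix.cons_val_one,
        Matrix.head_cons, Matrix.cons_val_two, Matrix.tail_cons,
        Matrix.cons_val_three, Matrix.cons_val_four, cv7_5, cv7_6,
        Fin.reduceFinMk]
    linarith [h5, hs 0 4, hs 2 6, hs 3 5]
  · simp only [Matrix.of_apply, Matrix.cons_val_zero, Matrix.cons_val_one,
        Matrix.head_cons, Matrix.cons_val_two, Matrix.tail_cons,
        Matrix.cons_val_three, Matrix.cons_val_four, cv7_5, cv7_6,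
        Fin.reduceFinMk]
    linarith [h2, hs 0 5, hs 1 6, hs 3 4]
  · simp only [Matrix.of_apply, Matrix.cons_val_zero, Matrix.cons_val_one,
        Matrix.head_cons, Matrix.cons_val_two, Matrix.tail_cons,
        Matrix.cons_val_three, Matrix.cons_val_four, cv7_5, cv7_6,
        Fin.reduceFinMk]
    linarith [h1, hs 0 6, hs 1 5, hs 2 4]
  · simp only [Matrix.of_apply, Matrix.cons_val_zero, Matrix.cons_val_one,
        Matrix.head_cons, Matrix.cons_val_two, Matrix.tail_cons,
        Matrix.cons_val_three, Matrix.cons_val_four, cv7_5, cv7_6,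
        Fin.reduceFinMk]
    linarith [h6, hs 0 1, hs 2 3, hs 5 6]
  · simp only [Matrix.of_apply, Matrix.cons_val_zero, Matrix.cons_val_one,
        Matrix.head_cons, Matrix.cons_val_two, Matrix.tail_cons,
        Matrix.cons_val_three, Matrix.cons_val_four, cv7_5, cv7_6,
        Fin.reduceFinMk]
    linarith [hs 1 1]
  · simp only [Matrix.of_apply, Matrix.cons_val_zero, Matrix.cons_val_one,
        Matrix.head_cons, Matrix.cons_val_two, Matrix.tail_cons,
        Matrix.cons_val_three, Matrix.cons_val_four, cv7_5, cv7_6,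
        Fin.reduceFinMk]
  · simp only [Matrix.of_apply, Matrix.cons_val_zero, Matrix.cons_val_one,
        Matrix.head_cons, Matrix.cons_val_two, Matrix.tail_cons,
        Matrix.cons_val_three, Matrix.cons_val_four, cv7_5, cv7_6,
        Fin.reduceFinMk]
  · simp only [Matrix.of_apply, Matrix.cons_val_zero, Matrix.cons_val_one,
        Matrix.head_cons, Matrix.cons_val_two, Matrix.tail_cons,
        Matrix.cons_val_three, Matrix.cons_val_four, cv7_5, cv7_6,
        Fin.reduceFinMk]
    linarith [h7, hs 1 4, hs 2 5, hs 3 6]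
  · simp only [Matrix.of_apply, Matrix.cons_val_zero, Matrix.cons_val_one,
        Matrix.head_cons, Matrix.cons_val_two, Matrix.tail_cons,
        Matrix.cons_val_three, Matrix.cons_val_four, cv7_5, cv7_6,
        Fin.reduceFinMk]
  · simp only [Matrix.of_apply, Matrix.cons_val_zero, Matrix.cons_val_one,
        Matrix.head_cons, Matrix.cons_val_two, Matrix.tail_cons,
        Matrix.cons_val_three, Matrix.cons_val_four, cv7_5, cv7_6,
        Fin.reduceFinMk]
  · simp only [Matrix.of_apply, Matrix.cons_val_zero, Matrix.cons_val_one,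
        Matrix.head_cons, Matrix.cons_val_two, Matrix.tail_cons,
        Matrix.cons_val_three, Matrix.cons_val_four, cv7_5, cv7_6,
        Fin.reduceFinMk]
    linarith [h4, hs 0 2, hs 1 3, hs 4 6]
  · simp only [Matrix.of_apply, Matrix.cons_val_zero, Matrix.cons_val_one,
        Matrix.head_cons, Matrix.cons_val_two, Matrix.tail_cons,
        Matrix.cons_val_three, Matrix.cons_val_four, cv7_5, cv7_6,
        Fin.reduceFinMk]
    linarith [hs 1 2]
  · simp only [Matrix.of_apply, Matrix.cons_val_zero, Matrix.cons_val_one,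
        Matrix.head_cons, Matrix.cons_val_two, Matrix.tail_cons,
        Matrix.cons_val_three, Matrix.cons_val_four, cv7_5, cv7_6,
        Fin.reduceFinMk]
    linarith [hs 2 2]
  · simp only [Matrix.of_apply, Matrix.cons_val_zero, Matrix.cons_val_one,
        Matrix.head_cons, Matrix.cons_val_two, Matrix.tail_cons,
        Matrix.cons_val_three, Matrix.cons_val_four, cv7_5, cv7_6,
        Fin.reduceFinMk]
  · simp only [Matrix.of_apply, Matrix.cons_val_zero, Matrix.cons_val_one,
        Matrix.head_cons, Matrix.cons_val_two, Matrix.tail_cons,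
        Matrix.cons_val_three, Matrix.cons_val_four, cv7_5, cv7_6,
        Fin.reduceFinMk]
  · simp only [Matrix.of_apply, Matrix.cons_val_zero, Matrix.cons_val_one,
        Matrix.head_cons, Matrix.cons_val_two, Matrix.tail_cons,
        Matrix.cons_val_three, Matrix.cons_val_four, cv7_5, cv7_6,
        Fin.reduceFinMk]
  · simp only [Matrix.of_apply, Matrix.cons_val_zero, Matrix.cons_val_one,
        Matrix.head_cons, Matrix.cons_val_two, Matrix.tail_cons,
        Matrix.cons_val_three, Matrix.cons_val_four, cv7_5, cv7_6,
        Fin.reduceFinMk]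
  · simp only [Matrix.of_apply, Matrix.cons_val_zero, Matrix.cons_val_one,
        Matrix.head_cons, Matrix.cons_val_two, Matrix.tail_cons,
        Matrix.cons_val_three, Matrix.cons_val_four, cv7_5, cv7_6,
        Fin.reduceFinMk]
    linarith [h3, hs 0 3, hs 1 2, hs 4 5]
  · simp only [Matrix.of_apply, Matrix.cons_val_zero, Matrix.cons_val_one,
        Matrix.head_cons, Matrix.cons_val_two, Matrix.tail_cons,
        Matrix.cons_val_three, Matrix.cons_val_four, cv7_5, cv7_6,
        Fin.reduceFinMk]
    linarith [hs 1 3]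
  · simp only [Matrix.of_apply, Matrix.cons_val_zero, Matrix.cons_val_one,
        Matrix.head_cons, Matrix.cons_val_two, Matrix.tail_cons,
        Matrix.cons_val_three, Matrix.cons_val_four, cv7_5, cv7_6,
        Fin.reduceFinMk]
    linarith [hs 2 3]
  · simp only [Matrix.of_apply, Matrix.cons_val_zero, Matrix.cons_val_one,
        Matrix.head_cons, Matrix.cons_val_two, Matrix.tail_cons,
        Matrix.cons_val_three, Matrix.cons_val_four, cv7_5, cv7_6,
        Fin.reduceFinMk]
    linarith [hs 3 3]
  · simp only [Matrix.of_apply, Matrix.cons_val_zero, Matrix.cons_val_one,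
        Matrix.head_cons, Matrix.cons_val_two, Matrix.tail_cons,
        Matrix.cons_val_three, Matrix.cons_val_four, cv7_5, cv7_6,
        Fin.reduceFinMk]
  · simp only [Matrix.of_apply, Matrix.cons_val_zero, Matrix.cons_val_one,
        Matrix.head_cons, Matrix.cons_val_two, Matrix.tail_cons,
        Matrix.cons_val_three, Matrix.cons_val_four, cv7_5, cv7_6,
        Fin.reduceFinMk]
  · simp only [Matrix.of_apply, Matrix.cons_val_zero, Matrix.cons_val_one,
        Matrix.head_cons, Matrix.cons_val_two, Matrix.tail_cons,
        Matrix.cons_val_three, Matrix.cons_val_four, cv7_5, cv7_6,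
        Fin.reduceFinMk]
  · simp only [Matrix.of_apply, Matrix.cons_val_zero, Matrix.cons_val_one,
        Matrix.head_cons, Matrix.cons_val_two, Matrix.tail_cons,
        Matrix.cons_val_three, Matrix.cons_val_four, cv7_5, cv7_6,
        Fin.reduceFinMk]
    linarith [h5, hs 0 4, hs 2 6, hs 3 5]
  · simp only [Matrix.of_apply, Matrix.cons_val_zero, Matrix.cons_val_one,
        Matrix.head_cons, Matrix.cons_val_two, Matrix.tail_cons,
        Matrix.cons_val_three, Matrix.cons_val_four, cv7_5, cv7_6,
        Fin.reduceFinMk]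
    linarith [h7, hs 1 4, hs 2 5, hs 3 6]
  · simp only [Matrix.of_apply, Matrix.cons_val_zero, Matrix.cons_val_one,
        Matrix.head_cons, Matrix.cons_val_two, Matrix.tail_cons,
        Matrix.cons_val_three, Matrix.cons_val_four, cv7_5, cv7_6,
        Fin.reduceFinMk]
    linarith [hs 2 4]
  · simp only [Matrix.of_apply, Matrix.cons_val_zero, Matrix.cons_val_one,
        Matrix.head_cons, Matrix.cons_val_two, Matrix.tail_cons,
        Matrix.cons_val_three, Matrix.cons_val_four, cv7_5, cv7_6,
        Fin.reduceFinMk]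
    linarith [hs 3 4]
  · simp only [Matrix.of_apply, Matrix.cons_val_zero, Matrix.cons_val_one,
        Matrix.head_cons, Matrix.cons_val_two, Matrix.tail_cons,
        Matrix.cons_val_three, Matrix.cons_val_four, cv7_5, cv7_6,
        Fin.reduceFinMk]
    linarith [hs 4 4]
  · simp only [Matrix.of_apply, Matrix.cons_val_zero, Matrix.cons_val_one,
        Matrix.head_cons, Matrix.cons_val_two, Matrix.tail_cons,
        Matrix.cons_val_three, Matrix.cons_val_four, cv7_5, cv7_6,
        Fin.reduceFinMk]
  · simp only [Matrix.of_apply, Matrix.cons_val_zero, Matrix.cons_val_one,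
        Matrix.head_cons, Matrix.cons_val_two, Matrix.tail_cons,
        Matrix.cons_val_three, Matrix.cons_val_four, cv7_5, cv7_6,
        Fin.reduceFinMk]
  · simp only [Matrix.of_apply, Matrix.cons_val_zero, Matrix.cons_val_one,
        Matrix.head_cons, Matrix.cons_val_two, Matrix.tail_cons,
        Matrix.cons_val_three, Matrix.cons_val_four, cv7_5, cv7_6,
        Fin.reduceFinMk]
    linarith [h2, hs 0 5, hs 1 6, hs 3 4]
  · simp only [Matrix.of_apply, Matrix.cons_val_zero, Matrix.cons_val_one,
        Matrix.head_cons, Matrix.cons_val_two, Matrix.tail_cons,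
        Matrix.cons_val_three, Matrix.cons_val_four, cv7_5, cv7_6,
        Fin.reduceFinMk]
    linarith [hs 1 5]
  · simp only [Matrix.of_apply, Matrix.cons_val_zero, Matrix.cons_val_one,
        Matrix.head_cons, Matrix.cons_val_two, Matrix.tail_cons,
        Matrix.cons_val_three, Matrix.cons_val_four, cv7_5, cv7_6,
        Fin.reduceFinMk]
    linarith [hs 2 5]
  · simp only [Matrix.of_apply, Matrix.cons_val_zero, Matrix.cons_val_one,
        Matrix.head_cons, Matrix.cons_val_two, Matrix.tail_cons,
        Matrix.cons_val_three, Matrix.cons_val_four, cv7_5, cv7_6,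
        Fin.reduceFinMk]
    linarith [hs 3 5]
  · simp only [Matrix.of_apply, Matrix.cons_val_zero, Matrix.cons_val_one,
        Matrix.head_cons, Matrix.cons_val_two, Matrix.tail_cons,
        Matrix.cons_val_three, Matrix.cons_val_four, cv7_5, cv7_6,
        Fin.reduceFinMk]
    linarith [hs 4 5]
  · simp only [Matrix.of_apply, Matrix.cons_val_zero, Matrix.cons_val_one,
        Matrix.head_cons, Matrix.cons_val_two, Matrix.tail_cons,
        Matrix.cons_val_three, Matrix.cons_val_four, cv7_5, cv7_6,
        Fin.reduceFinMk]
    linarith [hs 5 5]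
  · simp only [Matrix.of_apply, Matrix.cons_val_zero, Matrix.cons_val_one,
        Matrix.head_cons, Matrix.cons_val_two, Matrix.tail_cons,
        Matrix.cons_val_three, Matrix.cons_val_four, cv7_5, cv7_6,
        Fin.reduceFinMk]
  · simp only [Matrix.of_apply, Matrix.cons_val_zero, Matrix.cons_val_one,
        Matrix.head_cons, Matrix.cons_val_two, Matrix.tail_cons,
        Matrix.cons_val_three, Matrix.cons_val_four, cv7_5, cv7_6,
        Fin.reduceFinMk]
    linarith [h1, hs 0 6, hs 1 5, hs 2 4]
  · simp only [Matrix.of_apply, Matrix.cons_val_zero, Matrix.cons_val_one,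
        Matrix.head_cons, Matrix.cons_val_two, Matrix.tail_cons,
        Matrix.cons_val_three, Matrix.cons_val_four, cv7_5, cv7_6,
        Fin.reduceFinMk]
    linarith [hs 1 6]
  · simp only [Matrix.of_apply, Matrix.cons_val_zero, Matrix.cons_val_one,
        Matrix.head_cons, Matrix.cons_val_two, Matrix.tail_cons,
        Matrix.cons_val_three, Matrix.cons_val_four, cv7_5, cv7_6,
        Fin.reduceFinMk]
    linarith [hs 2 6]
  · simp only [Matrix.of_apply, Matrix.cons_val_zero, Matrix.cons_val_one,
        Matrix.head_cons, Matrix.cons_val_two, Matrix.tail_cons,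
        Matrix.cons_val_three, Matrix.cons_val_four, cv7_5, cv7_6,
        Fin.reduceFinMk]
    linarith [hs 3 6]
  · simp only [Matrix.of_apply, Matrix.cons_val_zero, Matrix.cons_val_one,
        Matrix.head_cons, Matrix.cons_val_two, Matrix.tail_cons,
        Matrix.cons_val_three, Matrix.cons_val_four, cv7_5, cv7_6,
        Fin.reduceFinMk]
    linarith [hs 4 6]
  · simp only [Matrix.of_apply, Matrix.cons_val_zero, Matrix.cons_val_one,
        Matrix.head_cons, Matrix.cons_val_two, Matrix.tail_cons,
        Matrix.cons_val_three, Matrix.cons_val_four, cv7_5, cv7_6,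
        Fin.reduceFinMk]
    linarith [hs 5 6]
  · simp only [Matrix.of_apply, Matrix.cons_val_zero, Matrix.cons_val_one,
        Matrix.head_cons, Matrix.cons_val_two, Matrix.tail_cons,
        Matrix.cons_val_three, Matrix.cons_val_four, cv7_5, cv7_6,
        Fin.reduceFinMk]
    linarith [hs 6 6]


/-- `𝔤₂` as a submodule. -/
def g2S : Submodule ℝ (Matrix (Fin 7) (Fin 7) ℝ) where
  carrier := g2
  zero_mem' := by
    refine ⟨by simp, ?_⟩
    intro u v w
    simp [Matrix.zero_mulVec, phi, det3]
  add_mem' := by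
    rintro X Y ⟨hX1, hX2⟩ ⟨hY1, hY2⟩
    refine ⟨by rw [Matrix.transpose_add, hX1, hY1, neg_add], ?_⟩
    intro u v w
    rw [Matrix.add_mulVec, Matrix.add_mulVec, Matrix.add_mulVec,
      phi_add₁, phi_add₂, phi_add₃]
    linarith [hX2 u v w, hY2 u v w]
  smul_mem' := by
    rintro r X ⟨hX1, hX2⟩
    refine ⟨by rw [Matrix.transpose_smul, hX1, smul_neg], ?_⟩
    intro u v w
    rw [Matrix.smul_mulVec, Matrix.smul_mulVec,
      Matrix.smul_mulVec, phi_smul₁, phi_smul₂, phi_smul₃]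
    linear_combination r * hX2 u v w

/-- The linear equivalence with `ℝ¹⁴`. -/
def g2Equiv : g2S ≃ₗ[ℝ] (Fin 14 → ℝ) where
  toFun X := pmap X.1
  invFun c := ⟨gmat c, gmat_mem c⟩
  left_inv X := Subtype.ext (gmat_pmap X.2)
  right_inv := pmap_gmat
  map_add' X Y := by
    funext t
    fin_cases t <;> rfl
  map_smul' r X := by
    funext t
    fin_cases t <;> rfl

/-- `𝔤₂` is a Lie subalgebra of `𝔤𝔩(7, ℝ)` — a linear subspace closed under
the matrix commutator — of dimension `14`. -/
theorem g2_lie_subalgebra_dim_14 :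
    ∃ S : Submodule ℝ (Matrix (Fin 7) (Fin 7) ℝ),
      (S : Set (Matrix (Fin 7) (Fin 7) ℝ)) = g2 ∧
      (∀ X ∈ S, ∀ Y ∈ S, X * Y - Y * X ∈ S) ∧
      Module.finrank ℝ S = 14 := by
  refine ⟨g2S, rfl, ?_, ?_⟩
  · intro X hX Y hY
    obtain ⟨hX1, hX2⟩ := hX
    obtain ⟨hY1, hY2⟩ := hY
    refine ⟨?_, ?_⟩
    · rw [Matrix.transpose_sub, Matrix.transpose_mul, Matrix.transpose_mul,
        hX1, hY1, neg_mul_neg, neg_mul_neg, neg_sub]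
    · intro u v w
      have e1 : ∀ z : Fin 7 → ℝ, (X * Y - Y * X) *ᵥ z
          = X *ᵥ (Y *ᵥ z) - Y *ᵥ (X *ᵥ z) := by
        intro z
        rw [Matrix.sub_mulVec, Matrix.mulVec_mulVec, Matrix.mulVec_mulVec]
      rw [e1, e1, e1, phi_sub₁, phi_sub₂, phi_sub₃]
      linarith [hX2 (Y *ᵥ u) v w, hX2 u (Y *ᵥ v) w, hX2 u v (Y *ᵥ w),
        hY2 (X *ᵥ u) v w, hY2 u (X *ᵥ v) w, hY2 u v (X *ᵥ w)]
  · rw [g2Equiv.finrank_eq]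
    simp
end
end

section
/- The set {X ∈ 𝔤₂ : X maps span(e₁, e₂) into span(e₁, e₂)} is a Lie subalgebra of 𝔤₂ of dimension 4. (This is the infinitesimal stabilizer of an oriented 2-plane, a copy of 𝔲(2) inside 𝔤₂; it makes G₂ a principal U(2)-bundle over the oriented Grassmannian of 2-planes in ℝ⁷.) -/
/-!
Indices below are 1-based, while Lean's are 0-based. An `X` in the stabilizer maps `e₁, e₂` into
the plane, so by skew-symmetry its first two rows and columns vanish except for `X₁₂`. The
derivation identity for `φ` on the seven basis triples `(e₁, e₂, eₖ)` (`k = 3, 4, 6, 7`),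
`(e₁, e₃, e₄)`, `(e₁, e₃, e₇)`, `(e₂, e₃, e₄)` then kills the row and column of `e₅` and leaves the
entries `X₃₄, X₃₇, X₃₆, X₆₇` free; they are the coordinates of `X` in an explicit basis of four
matrices. Closure under brackets holds because the infinitesimal stabilizers of a trilinear form
and of a subspace are both Lie algebras.
-/

noncomputable section

open Matrix

/-- The oriented 2-plane `span(e₁, e₂)`: the vectors `(x₁,x₂,0,0,0,0,0)`. -/
def plane12 : Set (Fin 7 → ℝ) :=
  {x | x 2 = 0 ∧ x 3 = 0 ∧ x 4 = 0 ∧ x 5 = 0 ∧ x 6 = 0}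

section Stabilizer

variable {R n : Type*} [CommRing R] [Fintype n]

def matrixStabilizer (P : Submodule R (n → R)) : Submodule R (Matrix n n R) where
  carrier := {X | ∀ x ∈ P, X *ᵥ x ∈ P}
  add_mem' hX hY x hx := by rw [add_mulVec]; exact P.add_mem (hX x hx) (hY x hx)
  zero_mem' x _ := by rw [zero_mulVec]; exact P.zero_mem
  smul_mem' c X hX x hx := by rw [smul_mulVec]; exact P.smul_mem c (hX x hx)

theorem commutator_mem_matrixStabilizer {P : Submodule R (n → R)} {X Y : Matrix n n R}
    (hX : X ∈ matrixStabilizer P) (hY : Y ∈ matrixStabilizer P) :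
    X * Y - Y * X ∈ matrixStabilizer P := fun x hx => by
  rw [sub_mulVec, ← mulVec_mulVec, ← mulVec_mulVec]
  exact P.sub_mem (hX _ (hY x hx)) (hY _ (hX x hx))

end Stabilizer

def plane12Submodule : Submodule ℝ (Fin 7 → ℝ) where
  carrier := plane12
  add_mem' hx hy := by simp_all [plane12]
  zero_mem' := by simp [plane12]
  smul_mem' c x hx := by simp_all [plane12]

@[simp]
theorem mem_plane12Submodule {x : Fin 7 → ℝ} : x ∈ plane12Submodule ↔ x ∈ plane12 := Iff.rfl

def phiDeriv (X : Matrix (Fin 7) (Fin 7) ℝ) (u v w : Fin 7 → ℝ) : ℝ :=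
  phi (X *ᵥ u) v w + phi u (X *ᵥ v) w + phi u v (X *ᵥ w)

theorem phiDeriv_add (X Y : Matrix (Fin 7) (Fin 7) ℝ) (u v w : Fin 7 → ℝ) :
    phiDeriv (X + Y) u v w = phiDeriv X u v w + phiDeriv Y u v w := by
  simp only [phiDeriv, phi, det3, add_mulVec, Pi.add_apply]
  ring

theorem phiDeriv_smul (c : ℝ) (X : Matrix (Fin 7) (Fin 7) ℝ) (u v w : Fin 7 → ℝ) :
    phiDeriv (c • X) u v w = c * phiDeriv X u v w := by
  simp only [phiDeriv, phi, det3, smul_mulVec, Pi.smul_apply, smul_eq_mul]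
  ring

/-- The cross terms `φ(Xu, Yv, w)` etc. are symmetric in `X, Y` and cancel. -/
theorem phiDeriv_commutator (X Y : Matrix (Fin 7) (Fin 7) ℝ) (u v w : Fin 7 → ℝ) :
    phiDeriv (X * Y - Y * X) u v w =
      phiDeriv X (Y *ᵥ u) v w + phiDeriv X u (Y *ᵥ v) w + phiDeriv X u v (Y *ᵥ w) -
        (phiDeriv Y (X *ᵥ u) v w + phiDeriv Y u (X *ᵥ v) w + phiDeriv Y u v (X *ᵥ w)) := by
  simp only [phiDeriv, phi, det3, sub_mulVec, ← mulVec_mulVec, Pi.sub_apply]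
  ring

theorem mem_g2_iff {X : Matrix (Fin 7) (Fin 7) ℝ} :
    X ∈ g2 ↔ Xᵀ = -X ∧ ∀ u v w, phiDeriv X u v w = 0 := Iff.rfl

def g2Submodule : Submodule ℝ (Matrix (Fin 7) (Fin 7) ℝ) where
  carrier := g2
  add_mem' {X Y} hX hY := by
    rw [mem_g2_iff] at *
    refine ⟨by rw [transpose_add, hX.1, hY.1, neg_add], fun u v w => ?_⟩
    rw [phiDeriv_add, hX.2, hY.2, add_zero]
  zero_mem' := ⟨by simp, fun u v w => by simp [phi, det3]⟩
  smul_mem' c X hX := by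
    rw [mem_g2_iff] at *
    refine ⟨by rw [transpose_smul, hX.1, smul_neg], fun u v w => ?_⟩
    rw [phiDeriv_smul, hX.2, mul_zero]

theorem commutator_mem_g2 {X Y : Matrix (Fin 7) (Fin 7) ℝ} (hX : X ∈ g2) (hY : Y ∈ g2) :
    X * Y - Y * X ∈ g2 := by
  rw [mem_g2_iff] at *
  refine ⟨by rw [transpose_sub, transpose_mul, transpose_mul, hX.1, hY.1]; noncomm_ring,
    fun u v w => ?_⟩
  simp [phiDeriv_commutator, hX.2, hY.2]

def planeStabilizer : Submodule ℝ (Matrix (Fin 7) (Fin 7) ℝ) :=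
  g2Submodule ⊓ matrixStabilizer plane12Submodule

/-- All four matrices annihilate `e₅ = ±e₁ × e₂` and preserve `span(e₃, e₄, e₆, e₇)`; the first
and last also rotate the plane `span(e₁, e₂)`. -/
def u2Basis : Fin 4 → Matrix (Fin 7) (Fin 7) ℝ :=
  ![!![0, -1, 0, 0, 0, 0, 0;
       1, 0, 0, 0, 0, 0, 0;
       0, 0, 0, 1, 0, 0, 0;
       0, 0, -1, 0, 0, 0, 0;
       0, 0, 0, 0, 0, 0, 0;
       0, 0, 0, 0, 0, 0, 0;
       0, 0, 0, 0, 0, 0, 0],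
    !![0, 0, 0, 0, 0, 0, 0;
       0, 0, 0, 0, 0, 0, 0;
       0, 0, 0, 0, 0, 0, 1;
       0, 0, 0, 0, 0, 1, 0;
       0, 0, 0, 0, 0, 0, 0;
       0, 0, 0, -1, 0, 0, 0;
       0, 0, -1, 0, 0, 0, 0],
    !![0, 0, 0, 0, 0, 0, 0;
       0, 0, 0, 0, 0, 0, 0;
       0, 0, 0, 0, 0, -1, 0;
       0, 0, 0, 0, 0, 0, 1;
       0, 0, 0, 0, 0, 0, 0;
       0, 0, 1, 0, 0, 0, 0;
       0, 0, 0, -1, 0, 0, 0],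
    !![0, 1, 0, 0, 0, 0, 0;
       -1, 0, 0, 0, 0, 0, 0;
       0, 0, 0, 0, 0, 0, 0;
       0, 0, 0, 0, 0, 0, 0;
       0, 0, 0, 0, 0, 0, 0;
       0, 0, 0, 0, 0, 0, 1;
       0, 0, 0, 0, 0, -1, 0]]

def u2Coords : Matrix (Fin 7) (Fin 7) ℝ →ₗ[ℝ] Fin 4 → ℝ where
  toFun X := ![X 2 3, X 2 6, -X 2 5, X 5 6]
  map_add' X Y := by ext i; fin_cases i <;> simp; ring
  map_smul' c X := by ext i; fin_cases i <;> simp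

theorem u2Coords_u2Basis (i : Fin 4) : u2Coords (u2Basis i) = Pi.single i 1 := by
  ext j
  fin_cases i <;> fin_cases j <;> simp [u2Coords, u2Basis]

theorem linearIndependent_u2Basis : LinearIndependent ℝ u2Basis :=
  LinearIndependent.of_comp u2Coords <| by
    convert Pi.linearIndependent_single_one (Fin 4) ℝ
    exact u2Coords_u2Basis _

theorem u2Basis_mem_planeStabilizer (i : Fin 4) : u2Basis i ∈ planeStabilizer := by
  refine ⟨⟨?_, fun u v w => ?_⟩, ?_⟩
  · ext j k
    fin_cases i <;> fin_cases j <;> fin_cases k <;> simp [u2Basis]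
  · fin_cases i <;> simp [u2Basis, phi, det3, mulVec, dotProduct, Fin.sum_univ_seven] <;> ring
  · rintro x ⟨h2, h3, h4, h5, h6⟩
    fin_cases i <;> simp [plane12, u2Basis, dotProduct, Fin.sum_univ_seven, h2, h3, h4, h5, h6]

theorem eq_sum_u2Coords_smul_u2Basis {X : Matrix (Fin 7) (Fin 7) ℝ} (hX : X ∈ planeStabilizer) :
    X = ∑ i, u2Coords X i • u2Basis i := by
  obtain ⟨⟨htrans, hphi⟩, hplane⟩ := hX
  have hskew (i j : Fin 7) : X j i = -X i j := by simpa using congrFun (congrFun htrans i) j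
  -- oriented so that `simp` rewrites only entries below the diagonal and cannot loop
  have hlower (i j : Fin 7) (_ : i < j) : X j i = -X i j := hskew i j
  have hdiag (i : Fin 7) : X i i = 0 := by linarith [hskew i i]
  obtain ⟨x02, x03, x04, x05, x06⟩ := hplane (Pi.single 0 1) (by simp [plane12])
  obtain ⟨x12, x13, x14, x15, x16⟩ := hplane (Pi.single 1 1) (by simp [plane12])
  simp [mulVec_single, hlower] at x02 x03 x04 x05 x06 x12 x13 x14 x15 x16
  have h012 := hphi (Pi.single 0 1) (Pi.single 1 1) (Pi.single 2 1)
  have h013 := hphi (Pi.single 0 1) (Pi.single 1 1) (Pi.single 3 1)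
  have h015 := hphi (Pi.single 0 1) (Pi.single 1 1) (Pi.single 5 1)
  have h016 := hphi (Pi.single 0 1) (Pi.single 1 1) (Pi.single 6 1)
  have h023 := hphi (Pi.single 0 1) (Pi.single 2 1) (Pi.single 3 1)
  have h026 := hphi (Pi.single 0 1) (Pi.single 2 1) (Pi.single 6 1)
  have h123 := hphi (Pi.single 1 1) (Pi.single 2 1) (Pi.single 3 1)
  simp [phi, det3, mulVec_single, hlower] at h012 h013 h015 h016 h023 h026 h123
  ext i j
  simp only [Fin.sum_univ_four, Matrix.add_apply, Matrix.smul_apply, smul_eq_mul]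
  fin_cases i <;> fin_cases j <;> simp [u2Coords, u2Basis, hlower, hdiag] <;> linarith

theorem span_u2Basis : Submodule.span ℝ (Set.range u2Basis) = planeStabilizer := by
  refine le_antisymm (Submodule.span_le.2 ?_) fun X hX => ?_
  · rintro _ ⟨i, rfl⟩
    exact u2Basis_mem_planeStabilizer i
  · exact (Submodule.mem_span_range_iff_exists_fun ℝ).2
      ⟨_, (eq_sum_u2Coords_smul_u2Basis hX).symm⟩

/-- The elements of `𝔤₂` mapping `span(e₁, e₂)` into itself form a Lie
subalgebra of `𝔤₂` of dimension `4` (the infinitesimal stabilizer of an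
oriented 2-plane, a copy of `𝔲(2)`; it makes `G₂` a principal
`U(2)`-bundle over the oriented Grassmannian of 2-planes in `ℝ⁷`). -/
theorem g2_stab_plane_dim_4 :
    ∃ S : Submodule ℝ (Matrix (Fin 7) (Fin 7) ℝ),
      (S : Set (Matrix (Fin 7) (Fin 7) ℝ)) =
        {X ∈ g2 | ∀ x ∈ plane12, X *ᵥ x ∈ plane12} ∧
      (∀ X ∈ S, ∀ Y ∈ S, X * Y - Y * X ∈ S) ∧
      Module.finrank ℝ S = 4 := by
  refine ⟨planeStabilizer, rfl, fun X hX Y hY =>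
    ⟨commutator_mem_g2 hX.1 hY.1, commutator_mem_matrixStabilizer hX.2 hY.2⟩, ?_⟩
  rw [← span_u2Basis, finrank_span_eq_card linearIndependent_u2Basis, Fintype.card_fin]
end
end
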